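/- arXiv:1705.09459 — 5 statements merged into one kernel-verified Lean document; each statement's English description precedes it below -/
import Mathlib

section
/- For each n ≥ 1, the derivative of q_n satisfies q_n'(x) = -(n+1) · q_{n-1}(x) for all real x. -/
/-! Differentiate termwise: `d/dx (n+2).choose (k+1) * x^(n+1-k) = (n+2) * (n+1).choose (k+1) * x^(n-k)`
by `Nat.choose_mul_succ_eq`, and the extra index `k = n+1` contributes nothing to `q n` since
`(n+1).choose (n+2) = 0`. -/

open Finset Polynomial Real

noncomputable def q (n : ℕ) (x : ℝ) : ℝ :=
  (-1 : ℝ)^n * ∑ k ∈ (Finset.range (n+1)).filter (fun k => Even k),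
    ((n+1).choose (k+1) : ℝ) * (-1 : ℝ)^(k/2) * x^(n-k)

lemma q_eq_sum_range_of_le {n N : ℕ} (h : n + 1 ≤ N) (x : ℝ) :
    q n x = (-1 : ℝ)^n * ∑ k ∈ (range N).filter Even,
      ((n+1).choose (k+1) : ℝ) * (-1 : ℝ)^(k/2) * x^(n-k) := by
  refine congrArg _ (sum_subset (filter_subset_filter _ (range_subset_range.2 h)) ?_)
  intro k hkN hk
  have hnk : n + 1 < k + 1 := by
    simp only [mem_filter, mem_range, not_and] at hkN hk
    by_contra! hle
    exact hk (by omega) hkN.2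
  simp [Nat.choose_eq_zero_of_lt hnk]

/-- For `k > n` both sides vanish, so no restriction on `k` is needed. -/
lemma hasDerivAt_choose_mul_pow (n k : ℕ) (x : ℝ) :
    HasDerivAt (fun x : ℝ => ((n+2).choose (k+1) : ℝ) * x^(n+1-k))
      ((n+2 : ℝ) * (((n+1).choose (k+1) : ℝ) * x^(n-k))) x := by
  refine ((hasDerivAt_pow (n+1-k) x).const_mul ((n+2).choose (k+1) : ℝ)).congr_deriv ?_
  rcases le_or_gt k n with hkn | hnk
  · have hchoose := Nat.choose_mul_succ_eq (n+1) (k+1)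
    rw [show n + 1 + 1 - (k + 1) = n + 1 - k by omega] at hchoose
    have hchoose' : ((n+1).choose (k+1) : ℝ) * (n+2) =
        ((n+2).choose (k+1) : ℝ) * ((n+1-k : ℕ) : ℝ) := by
      exact_mod_cast hchoose
    rw [show n + 1 - k - 1 = n - k by omega]
    linear_combination -x^(n-k) * hchoose'
  · simp [Nat.choose_eq_zero_of_lt (show n + 1 < k + 1 by omega),
      show n + 1 - k = 0 by omega]

lemma hasDerivAt_q_succ (n : ℕ) (x : ℝ) : HasDerivAt (q (n+1)) (-(n+2 : ℝ) * q n x) x := by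
  have hterms := HasDerivAt.fun_sum (u := (range (n+2)).filter Even) fun k _ =>
    (hasDerivAt_choose_mul_pow n k x).const_mul ((-1 : ℝ)^(k/2))
  have hq : q (n+1) = fun y => (-1 : ℝ)^(n+1) * ∑ k ∈ (range (n+2)).filter Even,
      (-1 : ℝ)^(k/2) * (((n+2).choose (k+1) : ℝ) * y^(n+1-k)) := by
    ext y
    exact congrArg _ (sum_congr rfl fun k _ => by ring)
  rw [hq]
  refine (hterms.const_mul _).congr_deriv ?_
  rw [q_eq_sum_range_of_le (N := n+2) (by omega), mul_sum, mul_sum, mul_sum]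
  exact sum_congr rfl fun k _ => by ring

theorem q_deriv (n : ℕ) (hn : 1 ≤ n) (x : ℝ) :
    deriv (q n) x = -(n + 1 : ℝ) * q (n - 1) x := by
  obtain ⟨m, rfl⟩ : ∃ m, n = m + 1 := ⟨n - 1, by omega⟩
  rw [(hasDerivAt_q_succ m x).deriv, Nat.add_sub_cancel]
  push_cast
  ring
end

section
/- For each n ≥ 2, the polynomials q_n satisfy the three-term recurrence q_n(x) + 2x · q_{n-1}(x) + (1 + x²) · q_{n-2}(x) = 0 for all real x. -/
open Finset Polynomial Real

/-!
Up to the sign `(-1)^n`, `q n x` is the imaginary part of `(x + i)^(n+1)`: the even `k` pick out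
the odd powers of `i` in the binomial expansion. Since `x + i` is a root of `z² - 2xz + (1 + x²)`,
the powers of `x + i`, and hence their imaginary parts, satisfy the corresponding linear recurrence.
-/

open Complex

lemma Complex.re_I_pow (k : ℕ) : (I ^ k).re = if Even k then (-1 : ℝ) ^ (k / 2) else 0 := by
  obtain ⟨j, rfl | rfl⟩ := Nat.even_or_odd' k
  · rw [pow_mul, I_sq, ← ofReal_one, ← ofReal_neg, ← ofReal_pow, ofReal_re]
    simp
  · rw [pow_succ, pow_mul, I_sq, ← ofReal_one, ← ofReal_neg, ← ofReal_pow, re_ofReal_mul, I_re,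
      mul_zero]
    simp [Nat.not_even_bit1]

lemma q_eq_im_pow (n : ℕ) (x : ℝ) : q n x = (-1) ^ n * ((x + I) ^ (n + 1)).im := by
  rw [q, add_comm (x : ℂ), add_pow, sum_range_succ', add_im, im_sum, sum_filter]
  congr 1
  have h_const : (I ^ 0 * (x : ℂ) ^ (n + 1 - 0) * ((n + 1).choose 0 : ℂ)).im = 0 := by
    rw [pow_zero, one_mul, ← ofReal_pow, ← ofReal_natCast, ← ofReal_mul, ofReal_im]
  rw [h_const, add_zero]
  refine sum_congr rfl fun k _ => ?_
  have h_term : I ^ (k + 1) * (x : ℂ) ^ (n + 1 - (k + 1)) * ((n + 1).choose (k + 1) : ℂ) =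
      ((((n + 1).choose (k + 1) : ℝ) * x ^ (n - k) : ℝ) : ℂ) * I ^ k * I := by
    push_cast; ring
  rw [h_term, mul_I_im, re_ofReal_mul, re_I_pow]
  split_ifs <;> ring

lemma im_add_I_pow_add_two (x : ℝ) (m : ℕ) :
    ((x + I) ^ (m + 2)).im = 2 * x * ((x + I) ^ (m + 1)).im - (1 + x ^ 2) * ((x + I) ^ m).im := by
  have h : (x + I) ^ (m + 2) =
      ((2 * x : ℝ) : ℂ) * (x + I) ^ (m + 1) - ((1 + x ^ 2 : ℝ) : ℂ) * (x + I) ^ m := by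
    push_cast; linear_combination (x + I) ^ m * I_sq
  rw [h, sub_im, im_ofReal_mul, im_ofReal_mul]

theorem q_recurrence (n : ℕ) (hn : 2 ≤ n) (x : ℝ) :
    q n x + 2 * x * q (n - 1) x + (1 + x^2) * q (n - 2) x = 0 := by
  obtain ⟨m, rfl⟩ : ∃ m, n = m + 2 := ⟨n - 2, by omega⟩
  rw [Nat.add_sub_cancel, show m + 2 - 1 = m + 1 by omega, q_eq_im_pow, q_eq_im_pow, q_eq_im_pow,
    im_add_I_pow_add_two]
  ring
end

section
/- For each n ≥ 1 and all real x, the n-th derivative of arctan at x equals (n-1)! · q_{n-1}(x) / (1 + x²)^n. -/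
open Finset Polynomial Real

/-!
Since `arctan' x = 1 / (1 + x²) = Re (1 + i x)⁻¹`, the derivatives of `arctan` are the real parts
of those of the Möbius map `z ↦ (1 + i z)⁻¹`, namely `(-1)ᵐ m! iᵐ (1 + i x)⁻⁽ᵐ⁺¹⁾`. Rationalising
with `(1 + i x)(1 - i x) = 1 + x²` and `i (1 - i x) = x + i` turns this into
`(-1)ᵐ m! Im ((x + i)ᵐ⁺¹) / (1 + x²)ᵐ⁺¹`, and the binomial theorem identifies
`(-1)ᵐ Im ((x + i)ᵐ⁺¹)` with `q m x`.
-/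

open Complex

theorem iteratedDeriv_re_comp_ofReal {e : ℂ → ℂ} {U : Set ℂ} (he : DifferentiableOn ℂ e U)
    (hU : IsOpen U) (hreal : ∀ x : ℝ, (x : ℂ) ∈ U) (n : ℕ) (x : ℝ) :
    iteratedDeriv n (fun y : ℝ => (e y).re) x = (iteratedDeriv n e x).re := by
  induction n generalizing e with
  | zero => simp
  | succ n ih =>
    have hderiv : deriv (fun y : ℝ => (e y).re) = fun y : ℝ => (deriv e y).re := funext fun y =>
      ((he.differentiableAt (hU.mem_nhds (hreal y))).hasDerivAt.real_of_complex).deriv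
    rw [iteratedDeriv_succ', iteratedDeriv_succ', hderiv]
    exact ih (he.deriv hU)

theorem im_I_pow_succ (k : ℕ) : (I ^ (k + 1)).im = if Even k then (-1) ^ (k / 2) else 0 := by
  obtain ⟨t, rfl | rfl⟩ := Nat.even_or_odd' k
  · rw [if_pos (even_two_mul t), Nat.mul_div_cancel_left t two_pos, pow_succ, pow_mul, I_sq,
      mul_I_im]
    exact_mod_cast ofReal_re ((-1) ^ t)
  · rw [if_neg (Nat.not_even_two_mul_add_one t), show 2 * t + 1 + 1 = 2 * (t + 1) by ring,
      pow_mul, I_sq]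
    norm_cast

theorem im_ofReal_add_I_pow (x : ℝ) (n : ℕ) :
    (((x : ℂ) + I) ^ (n + 1)).im = ∑ k ∈ (range (n + 1)).filter Even,
      ((n + 1).choose (k + 1) : ℝ) * (-1) ^ (k / 2) * x ^ (n - k) := by
  rw [add_comm, add_pow, im_sum, sum_range_succ', sum_filter]
  simp only [← ofReal_pow, ← ofReal_natCast, mul_assoc, im_mul_ofReal, ← ofReal_mul,
    im_I_pow_succ]
  rw [pow_zero, one_im, zero_mul, add_zero]
  refine sum_congr rfl fun k _ => ?_
  split_ifs <;> rw [Nat.add_sub_add_right] <;> ring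

theorem q_eq_neg_one_pow_mul_im (n : ℕ) (x : ℝ) :
    q n x = (-1) ^ n * (((x : ℂ) + I) ^ (n + 1)).im := by
  rw [q, im_ofReal_add_I_pow]

theorem iteratedDeriv_inv_one_add_I_mul (n : ℕ) (z : ℂ) :
    iteratedDeriv n (fun z => (1 + I * z)⁻¹) z =
      (-1) ^ n * n.factorial * I ^ n * (1 + I * z) ^ (-1 - n : ℤ) := by
  simp only [add_comm (1 : ℂ), iteratedDeriv_eq_iterate, iter_deriv_inv_linear]

theorem re_inv_one_add_I_mul (x : ℝ) : ((1 + I * x)⁻¹).re = 1 / (1 + x ^ 2) := by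
  simp [inv_re, normSq_apply, sq]

theorem re_iteratedDeriv_inv_one_add_I_mul (n : ℕ) (x : ℝ) :
    (iteratedDeriv n (fun z => (1 + I * z)⁻¹) x).re =
      n.factorial * q n x / (1 + x ^ 2) ^ (n + 1) := by
  have hfactor : (1 + I * x) * (1 - I * x) = ((1 + x ^ 2 : ℝ) : ℂ) := by
    push_cast; linear_combination (-(x : ℂ) ^ 2) * I_sq
  have hconj : (x : ℂ) + I = I * (1 - I * x) := by linear_combination (x : ℂ) * I_sq
  have hne : (1 + I * x) * (1 - I * x) ≠ 0 := hfactor ▸ ofReal_ne_zero.2 (by positivity)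
  have hpow : (1 + I * x) ^ (-1 - n : ℤ) = ((1 + I * x) ^ (n + 1))⁻¹ := by
    rw [← zpow_natCast, ← zpow_neg]; push_cast; ring_nf
  have key : (-1) ^ n * n.factorial * I ^ n * (1 + I * x) ^ (-1 - n : ℤ) =
      (((-1) ^ n * n.factorial / (1 + x ^ 2) ^ (n + 1) : ℝ) : ℂ) *
        (-I * ((x : ℂ) + I) ^ (n + 1)) := by
    rw [hpow, ofReal_div, ofReal_pow, ← hfactor, hconj]
    have hplus := left_ne_zero_of_mul hne
    have hminus := right_ne_zero_of_mul hne
    push_cast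
    field_simp
    simp only [mul_pow]
    linear_combination
      (n.factorial * I ^ n * (1 + I * x) ^ (n + 1) * (1 - I * x) ^ (n + 1)) * I_sq
  rw [iteratedDeriv_inv_one_add_I_mul, q_eq_neg_one_pow_mul_im, key, re_ofReal_mul, neg_mul,
    neg_re, I_mul_re, neg_neg]
  ring

theorem arctan_iteratedDeriv (n : ℕ) (hn : 1 ≤ n) (x : ℝ) :
    iteratedDeriv n Real.arctan x = (n - 1).factorial * q (n - 1) x / (1 + x^2)^n := by
  obtain ⟨m, rfl⟩ := Nat.exists_eq_add_of_le' hn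
  set U : Set ℂ := {z | 1 + I * z ≠ 0}
  have hdiff : DifferentiableOn ℂ (fun z => (1 + I * z)⁻¹) U :=
    DifferentiableOn.inv (by fun_prop) fun _ hz => hz
  have hopen : IsOpen U := isOpen_ne_fun (by fun_prop) continuous_const
  have hreal (y : ℝ) : (y : ℂ) ∈ U := fun h => by simpa using congrArg re h
  rw [iteratedDeriv_succ', Real.deriv_arctan, Nat.add_sub_cancel]
  calc iteratedDeriv m (fun y : ℝ => 1 / (1 + y ^ 2)) x
      = iteratedDeriv m (fun y : ℝ => ((1 + I * y)⁻¹).re) x := by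
        simp only [re_inv_one_add_I_mul]
    _ = (iteratedDeriv m (fun z => (1 + I * z)⁻¹) x).re :=
        iteratedDeriv_re_comp_ofReal hdiff hopen hreal m x
    _ = m.factorial * q m x / (1 + x ^ 2) ^ (m + 1) := re_iteratedDeriv_inv_one_add_I_mul m x
end

section
/- For each n ≥ 0 and all real x, the (2n+1)-th derivative of arctan at x equals (-1)^n · (2n)! / (1+x²)^{n+1/2} · T_{2n+1}(1/√(1+x²)). -/
open Finset Polynomial Real

/-! With `θ = arctan x` one has `d/dx = cos² θ · d/dθ`, and `cos θ ^ k · sin (k (θ + π/2))` is mapped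
by this operator to `k · cos θ ^ (k + 1) · sin ((k + 1) (θ + π/2))`. Iterating from `arctan' = cos² θ`
gives `arctan^(m+1) x = m! · cos θ ^ (m+1) · sin ((m+1) (θ + π/2))`. For `m = 2n` the sine equals
`(-1)^n cos ((2n+1) θ) = (-1)^n T_{2n+1}(cos θ)`, and `cos θ = 1 / √(1 + x²)`. -/

theorem hasDerivAt_cos_arctan_pow_mul_sin (m : ℕ) (x : ℝ) :
    HasDerivAt (fun y => cos (arctan y) ^ (m + 1) * sin ((m + 1) * (arctan y + π / 2)))
      ((m + 1) * (cos (arctan x) ^ (m + 2) * sin ((m + 2) * (arctan x + π / 2)))) x := by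
  have hθ := hasDerivAt_arctan x
  rw [← cos_sq_arctan] at hθ
  have hsin := ((hθ.add_const (π / 2)).const_mul (m + 1 : ℝ)).sin
  refine ((hθ.cos.fun_pow (m + 1)).mul hsin).congr_deriv ?_
  have hshift : sin ((m + 2) * (arctan x + π / 2)) =
      cos ((m + 1) * (arctan x + π / 2) + arctan x) := by
    rw [← sin_add_pi_div_two]; ring_nf
  rw [hshift, cos_add]
  push_cast
  ring

theorem iteratedDeriv_succ_arctan (m : ℕ) :
    iteratedDeriv (m + 1) arctan =
      fun x => m.factorial * (cos (arctan x) ^ (m + 1) * sin ((m + 1) * (arctan x + π / 2))) := by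
  induction m with
  | zero =>
    ext x
    rw [iteratedDeriv_one, Real.deriv_arctan]
    show 1 / (1 + x ^ 2) = _
    rw [← cos_sq_arctan]
    simp [sin_add_pi_div_two, sq]
  | succ m ih =>
    ext x
    rw [iteratedDeriv_succ, ih, ((hasDerivAt_cos_arctan_pow_mul_sin m x).const_mul _).deriv]
    push_cast [Nat.factorial_succ]
    ring_nf

theorem sin_odd_mul_add_pi_div_two (n : ℕ) (θ : ℝ) :
    sin ((2 * n + 1) * (θ + π / 2)) = (-1) ^ n * cos ((2 * n + 1) * θ) := by
  rw [← sin_add_pi_div_two, ← sin_add_nat_mul_pi]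
  ring_nf

theorem arctan_odd_deriv_chebyshevT (n : ℕ) (x : ℝ) :
    iteratedDeriv (2 * n + 1) Real.arctan x =
      (-1 : ℝ)^n * (2 * n).factorial / ((1 + x^2)^n * Real.sqrt (1 + x^2)) *
        (Polynomial.Chebyshev.T ℝ (2 * n + 1)).eval (1 / Real.sqrt (1 + x^2)) := by
  have hpow : cos (arctan x) ^ (2 * n + 1) = 1 / ((1 + x ^ 2) ^ n * √(1 + x ^ 2)) := by
    rw [cos_arctan, div_pow, one_pow, pow_succ, pow_mul, sq_sqrt (by positivity)]
  rw [iteratedDeriv_succ_arctan, ← cos_arctan, Chebyshev.T_real_cos]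
  push_cast
  rw [sin_odd_mul_add_pi_div_two, hpow]
  ring
end

section
/- The normalized polynomials p_n := (-1)^n/(n+1) · q_n form an Appell sequence: each p_n is monic of degree n and p_n'(x) = n · p_{n-1}(x) for all n ≥ 1 and real x. -/
/-! Using `(n + 1) * C(n, k) = (k + 1) * C(n + 1, k + 1)`, `pPoly n` is the binomial transform
`∑ₖ C(n, k) sₖ xⁿ⁻ᵏ` of the Taylor data `sₖ` of `sin t / t` at `0`. Any sequence of this shape
satisfies `Aₙ₊₁' = (n + 1) Aₙ`, by `C(n + 1, k) (n + 1 - k) = (n + 1) C(n, k)`, and is monic of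
degree `n` as soon as `s₀ = 1`. -/

open Finset Polynomial Real

noncomputable def qPoly (n : ℕ) : Polynomial ℝ :=
  (-1 : ℝ)^n • ∑ k ∈ (Finset.range (n+1)).filter (fun k => Even k),
    Polynomial.C (((n+1).choose (k+1) : ℝ) * (-1 : ℝ)^(k/2)) * Polynomial.X^(n-k)

noncomputable def pPoly (n : ℕ) : Polynomial ℝ := ((-1 : ℝ)^n / (n + 1)) • qPoly n

namespace Polynomial

variable {R : Type*} [Semiring R] (a : ℕ → R)

noncomputable def appell (n : ℕ) : R[X] :=
  ∑ k ∈ range (n + 1), C (n.choose k * a k) * X ^ (n - k)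

theorem natDegree_appell_le (n : ℕ) : (appell a n).natDegree ≤ n :=
  natDegree_sum_le_of_forall_le _ _ fun k _ => (natDegree_C_mul_X_pow_le _ _).trans (Nat.sub_le n k)

theorem coeff_appell_self (n : ℕ) : (appell a n).coeff n = a 0 := by
  rw [appell, finsetSum_coeff, sum_eq_single 0]
  · simp
  · intro k _ hk0
    rw [coeff_C_mul_X_pow, if_neg]
    grind
  · simp

theorem monic_appell (ha : a 0 = 1) (n : ℕ) : (appell a n).Monic :=
  monic_of_natDegree_le_of_coeff_eq_one n (natDegree_appell_le a n) (by rw [coeff_appell_self, ha])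

theorem natDegree_appell [Nontrivial R] (ha : a 0 = 1) (n : ℕ) : (appell a n).natDegree = n :=
  natDegree_eq_of_le_of_coeff_ne_zero (natDegree_appell_le a n) (by simp [coeff_appell_self, ha])

theorem derivative_appell_succ (n : ℕ) :
    derivative (appell a (n + 1)) = ((n + 1 : ℕ) : R[X]) * appell a n := by
  simp_rw [appell, derivative_sum, derivative_C_mul_X_pow, mul_sum]
  rw [sum_range_succ, Nat.sub_self, Nat.cast_zero, mul_zero, C_0, zero_mul, add_zero]
  refine sum_congr rfl fun k hmem => ?_
  have hk : k ≤ n := Nat.lt_succ_iff.mp (mem_range.mp hmem)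
  have hchoose : ((n + 1).choose k * (n + 1 - k) : ℕ) = (n + 1) * n.choose k := by
    rw [← Nat.choose_mul_succ_eq, mul_comm]
  rw [show n + 1 - k - 1 = n - k by omega, ← mul_assoc, ← C_eq_natCast, ← C_mul, mul_assoc,
    ← (Nat.cast_commute _ _).eq, ← mul_assoc, ← Nat.cast_mul, hchoose, Nat.cast_mul, mul_assoc]

end Polynomial

-- `sincSeq k` is the `k`-th derivative of `sin t / t` at `t = 0`.
noncomputable def sincSeq (k : ℕ) : ℝ := if Even k then (-1) ^ (k / 2) / (k + 1) else 0

theorem pPoly_eq_appell (n : ℕ) : pPoly n = appell sincSeq n := by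
  have hscalar : (-1 : ℝ) ^ n / (n + 1) * (-1) ^ n = (n + 1 : ℝ)⁻¹ := by
    rw [div_mul_eq_mul_div, ← pow_add, ← two_mul, pow_mul]
    norm_num
  rw [pPoly, qPoly, smul_smul, hscalar, smul_sum, sum_filter, appell]
  refine sum_congr rfl fun k _ => ?_
  by_cases hk : Even k
  · have hchoose : ((n : ℝ) + 1) * n.choose k = (n + 1).choose (k + 1) * (k + 1) := by
      exact_mod_cast Nat.add_one_mul_choose_eq n k
    rw [if_pos hk, sincSeq, if_pos hk, smul_eq_C_mul, ← mul_assoc, ← C_mul]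
    congr 2
    field_simp
    exact hchoose.symm
  · simp [hk, sincSeq]

theorem pPoly_appell :
    (∀ n : ℕ, (pPoly n).Monic ∧ (pPoly n).natDegree = n) ∧
    (∀ n : ℕ, 1 ≤ n → ∀ x : ℝ,
      deriv (fun y => (pPoly n).eval y) x = n * (pPoly (n - 1)).eval x) := by
  have hseq : sincSeq 0 = 1 := by norm_num [sincSeq]
  refine ⟨fun n => ?_, fun n hn x => ?_⟩
  · rw [pPoly_eq_appell]
    exact ⟨monic_appell _ hseq n, natDegree_appell _ hseq n⟩
  · obtain ⟨m, rfl⟩ := Nat.exists_eq_add_of_le' hn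
    rw [Polynomial.deriv, pPoly_eq_appell, pPoly_eq_appell, Nat.add_sub_cancel,
      derivative_appell_succ, eval_mul, eval_natCast]
end
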